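/- Let V be a finite-dimensional complex inner product space with adjoint operators ∂̄, ∂̄* satisfying ∂̄² = 0. Then V decomposes as an internal orthogonal direct sum V = ker(Δ_∂̄) ⊕ im(∂̄) ⊕ im(∂̄*), where Δ_∂̄ = ∂̄∂̄* + ∂̄*∂̄ (Hodge decomposition). -/
import Mathlib

open scoped InnerProductSpace

/-- Hodge decomposition: a finite-dimensional complex inner product space with
adjoint operators `∂̄, ∂̄*` satisfying `∂̄² = 0` decomposes as the internal
orthogonal direct sum `V = ker(Δ_∂̄) ⊕ im(∂̄) ⊕ im(∂̄*)`. -/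
theorem hodge_decomposition
    {V : Type*} [NormedAddCommGroup V] [InnerProductSpace ℂ V]
    [FiniteDimensional ℂ V]
    (D Ds : V →ₗ[ℂ] V)
    (hadj : ∀ x y : V, ⟪D x, y⟫_ℂ = ⟪x, Ds y⟫_ℂ)
    (hD2 : ∀ x, D (D x) = 0) :
    (∀ x ∈ LinearMap.ker (D ∘ₗ Ds + Ds ∘ₗ D), ∀ y ∈ LinearMap.range D, ⟪x, y⟫_ℂ = 0) ∧
    (∀ x ∈ LinearMap.ker (D ∘ₗ Ds + Ds ∘ₗ D), ∀ y ∈ LinearMap.range Ds, ⟪x, y⟫_ℂ = 0) ∧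
    (∀ x ∈ LinearMap.range D, ∀ y ∈ LinearMap.range Ds, ⟪x, y⟫_ℂ = 0) ∧
    LinearMap.ker (D ∘ₗ Ds + Ds ∘ₗ D) ⊔ LinearMap.range D ⊔ LinearMap.range Ds = ⊤ := by
  have hadj' : ∀ x y : V, ⟪Ds x, y⟫_ℂ = ⟪x, D y⟫_ℂ := by
    intro x y
    rw [← inner_conj_symm, ← hadj, inner_conj_symm]
  -- ker Δ = ker D ∩ ker Ds
  have hker : ∀ x, x ∈ LinearMap.ker (D ∘ₗ Ds + Ds ∘ₗ D) → D x = 0 ∧ Ds x = 0 := by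
    intro x hx
    have hx0 : D (Ds x) + Ds (D x) = 0 := by
      simpa [LinearMap.add_apply, LinearMap.comp_apply] using (LinearMap.mem_ker.mp hx)
    have h1 : ⟪D (Ds x) + Ds (D x), x⟫_ℂ = 0 := by rw [hx0]; simp
    have h2 : ⟪Ds x, Ds x⟫_ℂ + ⟪D x, D x⟫_ℂ = 0 := by
      rw [← hadj, ← hadj']
      simpa [inner_add_left] using h1
    have h3 : (‖Ds x‖ : ℂ)^2 + (‖D x‖ : ℂ)^2 = 0 := by
      simpa [inner_self_eq_norm_sq_to_K] using h2
    have h4 : (‖Ds x‖ : ℝ)^2 + (‖D x‖ : ℝ)^2 = 0 := by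
      exact_mod_cast h3
    have h5 : ‖D x‖ = 0 := by nlinarith [sq_nonneg ‖Ds x‖, sq_nonneg ‖D x‖, norm_nonneg (D x), norm_nonneg (Ds x)]
    have h6 : ‖Ds x‖ = 0 := by nlinarith [sq_nonneg ‖Ds x‖, sq_nonneg ‖D x‖]
    exact ⟨norm_eq_zero.mp h5, norm_eq_zero.mp h6⟩
  have hDs2 : ∀ y, Ds (Ds y) = 0 := by
    intro y
    have : ∀ x : V, ⟪x, Ds (Ds y)⟫_ℂ = 0 := by
      intro x
      rw [← hadj, ← hadj]
      simp [hD2]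
    exact (inner_self_eq_zero (𝕜 := ℂ)).mp (this (Ds (Ds y)))
  refine ⟨?_, ?_, ?_, ?_⟩
  · rintro x hx y ⟨z, rfl⟩
    rw [← inner_conj_symm, hadj, (hker x hx).2]
    simp
  · rintro x hx y ⟨z, rfl⟩
    rw [← inner_conj_symm, hadj', (hker x hx).1]
    simp
  · rintro x ⟨a, rfl⟩ y ⟨b, rfl⟩
    rw [hadj, hDs2]
    simp
  · set K := LinearMap.ker (D ∘ₗ Ds + Ds ∘ₗ D) ⊔ LinearMap.range D ⊔ LinearMap.range Ds with hK
    rw [← Submodule.orthogonal_orthogonal K]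
    suffices h : Kᗮ = ⊥ by rw [h]; simp
    rw [Submodule.eq_bot_iff]
    intro x hx
    have hD : ∀ y, ⟪x, D y⟫_ℂ = 0 := by
      intro y
      rw [← inner_conj_symm, hx (D y) (Submodule.mem_sup_left (Submodule.mem_sup_right ⟨y, rfl⟩))]
      simp
    have hDs : ∀ y, ⟪x, Ds y⟫_ℂ = 0 := by
      intro y
      rw [← inner_conj_symm, hx (Ds y) (Submodule.mem_sup_right ⟨y, rfl⟩)]
      simp
    have hDx : D x = 0 := by
      have : ⟪D x, D x⟫_ℂ = 0 := by rw [hadj]; exact hDs (D x)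
      exact inner_self_eq_zero.mp this
    have hDsx : Ds x = 0 := by
      have : ⟪Ds x, Ds x⟫_ℂ = 0 := by rw [hadj']; exact hD (Ds x)
      exact inner_self_eq_zero.mp this
    have hxK : x ∈ K := by
      apply Submodule.mem_sup_left
      apply Submodule.mem_sup_left
      rw [LinearMap.mem_ker]
      simp [LinearMap.add_apply, LinearMap.comp_apply, hDx, hDsx]
    have : ⟪x, x⟫_ℂ = 0 := hx x hxK
    exact inner_self_eq_zero.mp this
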